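/- Let m, n be nonzero real numbers and define x(t) = exp(m·t)·cos(n·t), y(t) = exp(m·t)·sin(n·t), z(t) = exp(-2m·t) for t ∈ ℝ. Then the triple (x, y, z) satisfies the Tzitzeica curve equation W(x',y',z')(t) = α · (W(x,y,z)(t))² for all t ∈ ℝ, with α = -2m(m²+n²) / (n(9m²+n²)). -/

import Mathlib

/-- The Wronskian of three functions `x, y, z : ℝ → ℝ`. -/
noncomputable def W3 (x y z : ℝ → ℝ) (t : ℝ) : ℝ :=
  Matrix.det !![x t, y t, z t;
    deriv x t, deriv y t, deriv z t;
    deriv (deriv x) t, deriv (deriv y) t, deriv (deriv z) t]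

noncomputable def x₁₂ (m n : ℝ) : ℝ → ℝ := fun t => Real.exp (m * t) * Real.cos (n * t)
noncomputable def y₁₂ (m n : ℝ) : ℝ → ℝ := fun t => Real.exp (m * t) * Real.sin (n * t)
noncomputable def z₁₂ (m : ℝ) : ℝ → ℝ := fun t => Real.exp (-2 * m * t)

/-! The curve is a solution of a linear system `X' = X C` with constant `C`, so the rows of its
Wronskian matrix are `X, X C, X C²` and those of the Wronskian matrix of `X'` are the same times `C`:
`W(x',y',z') = det C · W(x,y,z)` with `det C = -2m(m² + n²)`. Since `trace C = 0` the Wronskian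
`W(x,y,z)` is constant, and a direct computation (using `cos² + sin² = 1` and
`e^{mt} e^{mt} e^{-2mt} = 1`) gives `W(x,y,z) = n(9m² + n²)`, so that
`det C · W = (det C / W) · W²`. -/

open Matrix

lemma div_mul_sq_self {G₀ : Type*} [GroupWithZero G₀] (a d : G₀) : a / d * d ^ 2 = a * d := by
  rcases eq_or_ne d 0 with rfl | hd
  · simp
  · rw [sq, ← mul_assoc, div_mul_cancel₀ a hd]

section LinearSystem

variable {f : ℝ → Fin 3 → ℝ} {C : Matrix (Fin 3) (Fin 3) ℝ}

lemma hasDerivAt_vecMul_of_hasDerivAt_vecMul (hf : ∀ t, HasDerivAt f (f t ᵥ* C) t) (t : ℝ) :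
    HasDerivAt (fun t => f t ᵥ* C) (f t ᵥ* C ᵥ* C) t :=
  (LinearMap.toContinuousLinearMap (Matrix.vecMulLinear C)).hasFDerivAt.comp_hasDerivAt t (hf t)

lemma deriv_apply_of_hasDerivAt_vecMul (hf : ∀ t, HasDerivAt f (f t ᵥ* C) t) (i : Fin 3) :
    deriv (fun t => f t i) = fun t => (f t ᵥ* C) i :=
  funext fun t => ((hasDerivAt_pi.1 (hf t)) i).deriv

lemma W3_eq_det_of_hasDerivAt_vecMul (hf : ∀ t, HasDerivAt f (f t ᵥ* C) t) (t : ℝ) :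
    W3 (fun t => f t 0) (fun t => f t 1) (fun t => f t 2) t
      = (Matrix.of ![f t, f t ᵥ* C, f t ᵥ* C ᵥ* C]).det := by
  simp only [W3, deriv_apply_of_hasDerivAt_vecMul hf,
    deriv_apply_of_hasDerivAt_vecMul (hasDerivAt_vecMul_of_hasDerivAt_vecMul hf)]
  congr 1
  ext i j
  fin_cases i <;> fin_cases j <;> rfl

lemma W3_deriv_of_hasDerivAt_vecMul (hf : ∀ t, HasDerivAt f (f t ᵥ* C) t) (t : ℝ) :
    W3 (deriv fun t => f t 0) (deriv fun t => f t 1) (deriv fun t => f t 2) t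
      = C.det * W3 (fun t => f t 0) (fun t => f t 1) (fun t => f t 2) t := by
  simp only [deriv_apply_of_hasDerivAt_vecMul hf]
  rw [W3_eq_det_of_hasDerivAt_vecMul (hasDerivAt_vecMul_of_hasDerivAt_vecMul hf),
    W3_eq_det_of_hasDerivAt_vecMul hf, mul_comm, ← det_mul]
  congr 1
  ext i j
  fin_cases i <;> rfl

end LinearSystem

-- `(x₁₂, y₁₂, z₁₂)` solves `X' = X · generator₁₂`: `x' = m x - n y`, `y' = n x + m y`, `z' = -2m z`.
noncomputable def curve₁₂ (m n : ℝ) (t : ℝ) : Fin 3 → ℝ := ![x₁₂ m n t, y₁₂ m n t, z₁₂ m t]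

def generator₁₂ (m n : ℝ) : Matrix (Fin 3) (Fin 3) ℝ := !![m, n, 0; -n, m, 0; 0, 0, -2 * m]

lemma det_generator₁₂ (m n : ℝ) : (generator₁₂ m n).det = -(2 * m * (m ^ 2 + n ^ 2)) := by
  rw [generator₁₂, det_fin_three]
  simp only [of_apply, cons_val', cons_val_zero, cons_val_one, cons_val, cons_val_fin_one, mul_neg,
    mul_zero, zero_mul, sub_zero, add_zero, neg_mul, neg_neg, neg_zero]
  ring

lemma hasDerivAt_x₁₂ (m n t : ℝ) : HasDerivAt (x₁₂ m n) (m * x₁₂ m n t - n * y₁₂ m n t) t := by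
  have hexp := ((hasDerivAt_id t).const_mul m).exp
  have hcos := ((hasDerivAt_id t).const_mul n).cos
  refine (hexp.mul hcos).congr_deriv ?_
  simp only [x₁₂, y₁₂, id]
  ring

lemma hasDerivAt_y₁₂ (m n t : ℝ) : HasDerivAt (y₁₂ m n) (n * x₁₂ m n t + m * y₁₂ m n t) t := by
  have hexp := ((hasDerivAt_id t).const_mul m).exp
  have hsin := ((hasDerivAt_id t).const_mul n).sin
  refine (hexp.mul hsin).congr_deriv ?_
  simp only [x₁₂, y₁₂, id]
  ring

lemma hasDerivAt_z₁₂ (m t : ℝ) : HasDerivAt (z₁₂ m) (-2 * m * z₁₂ m t) t := by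
  refine ((hasDerivAt_id t).const_mul (-2 * m)).exp.congr_deriv ?_
  simp only [z₁₂, id]
  ring

lemma hasDerivAt_curve₁₂ (m n t : ℝ) :
    HasDerivAt (curve₁₂ m n) (curve₁₂ m n t ᵥ* generator₁₂ m n) t := by
  refine hasDerivAt_pi.2 fun i => ?_
  fin_cases i
  · exact (hasDerivAt_x₁₂ m n t).congr_deriv (by simp [curve₁₂, generator₁₂]; ring)
  · exact (hasDerivAt_y₁₂ m n t).congr_deriv (by simp [curve₁₂, generator₁₂]; ring)
  · exact (hasDerivAt_z₁₂ m t).congr_deriv (by simp [curve₁₂, generator₁₂]; ring)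

lemma W3_x₁₂_y₁₂_z₁₂ (m n t : ℝ) : W3 (x₁₂ m n) (y₁₂ m n) (z₁₂ m) t = n * (9 * m ^ 2 + n ^ 2) := by
  have hexp : Real.exp (m * t) ^ 2 * Real.exp (-(2 * m * t)) = 1 := by
    rw [← Real.exp_nat_mul, ← Real.exp_add]; ring_nf; exact Real.exp_zero
  refine (W3_eq_det_of_hasDerivAt_vecMul (hasDerivAt_curve₁₂ m n) t).trans ?_
  rw [det_fin_three]
  simp only [curve₁₂, x₁₂, y₁₂, z₁₂, generator₁₂, vecMul_cons, head_cons, tail_cons, smul_cons,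
    smul_eq_mul, smul_empty, empty_vecMul, add_cons, empty_add_empty, neg_smul, neg_cons, neg_empty,
    of_apply, cons_val', cons_val_zero, cons_val_one, cons_val, cons_val_fin_one, neg_mul, mul_neg,
    mul_zero, add_zero, zero_add, neg_zero, neg_neg, sub_neg_eq_add]
  linear_combination (n * (9 * m ^ 2 + n ^ 2)) * hexp + (n * (9 * m ^ 2 + n ^ 2)) *
    Real.exp (m * t) ^ 2 * Real.exp (-(2 * m * t)) * Real.sin_sq_add_cos_sq (n * t)

lemma W3_deriv_x₁₂_y₁₂_z₁₂ (m n t : ℝ) :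
    W3 (deriv (x₁₂ m n)) (deriv (y₁₂ m n)) (deriv (z₁₂ m)) t
      = -(2 * m * (m ^ 2 + n ^ 2)) * W3 (x₁₂ m n) (y₁₂ m n) (z₁₂ m) t := by
  rw [← det_generator₁₂]
  exact W3_deriv_of_hasDerivAt_vecMul (hasDerivAt_curve₁₂ m n) t

theorem stmt_12_general (m n : ℝ) :
    ∀ t : ℝ, W3 (deriv (x₁₂ m n)) (deriv (y₁₂ m n)) (deriv (z₁₂ m)) t
      = (-(2 * m * (m ^ 2 + n ^ 2)) / (n * (9 * m ^ 2 + n ^ 2)))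
        * (W3 (x₁₂ m n) (y₁₂ m n) (z₁₂ m) t) ^ 2 := by
  intro t
  rw [W3_deriv_x₁₂_y₁₂_z₁₂, W3_x₁₂_y₁₂_z₁₂, div_mul_sq_self]

theorem stmt_12 (m n : ℝ) (hm : m ≠ 0) (hn : n ≠ 0) :
    ∀ t : ℝ, W3 (deriv (x₁₂ m n)) (deriv (y₁₂ m n)) (deriv (z₁₂ m)) t
      = (-(2 * m * (m ^ 2 + n ^ 2)) / (n * (9 * m ^ 2 + n ^ 2)))
        * (W3 (x₁₂ m n) (y₁₂ m n) (z₁₂ m) t) ^ 2 :=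
  stmt_12_general m n
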